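/- arXiv:1910.05650 — 3 statements merged into one kernel-verified Lean document; each statement's English description precedes it below -/
import Mathlib

section
/- Let f : ℝ^N → ℝ≥0 be continuous with f(x) = 0 iff x = 0, and suppose there exist α = (α₁,…,α_N) with each αᵢ > 0 and H > 0 such that f(ω^{α₁}x₁, …, ω^{α_N}x_N) = ω^H f(x) for all x ∈ ℝ^N and ω > 0. Then there exist constants c₁, c₂ > 0 such that for every x ∈ ℝ^N: c₁ (∑ᵢ |xᵢ|^{1/αᵢ})^H ≤ f(x) ≤ c₂ (∑ᵢ |xᵢ|^{1/αᵢ})^H. -/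
open Real

theorem stmt0 (N : ℕ) (f : (Fin N → ℝ) → ℝ)
    (hcont : Continuous f) (hnonneg : ∀ x, 0 ≤ f x)
    (hzero : ∀ x, f x = 0 ↔ x = 0)
    (α : Fin N → ℝ) (hα : ∀ i, 0 < α i) (H : ℝ) (hH : 0 < H)
    (hscal : ∀ ω : ℝ, 0 < ω → ∀ x, f (fun i => ω ^ (α i) * x i) = ω ^ H * f x) :
    ∃ c₁ c₂ : ℝ, 0 < c₁ ∧ 0 < c₂ ∧ ∀ x : Fin N → ℝ,
      c₁ * (∑ i, |x i| ^ (1 / α i)) ^ H ≤ f x ∧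
      f x ≤ c₂ * (∑ i, |x i| ^ (1 / α i)) ^ H := by
  set g : (Fin N → ℝ) → ℝ := fun x => ∑ i, |x i| ^ (1 / α i) with hg
  rcases Nat.eq_zero_or_pos N with hN | hN
  · subst hN
    refine ⟨1, 1, one_pos, one_pos, fun x => ?_⟩
    have hx : x = 0 := Subsingleton.elim x 0
    have hfx : f x = 0 := (hzero x).mpr hx
    have hsum : (∑ i : Fin 0, |x i| ^ (1 / α i)) = 0 := by simp
    rw [hfx, hsum, Real.zero_rpow hH.ne']
    simp
  · have hgcont : Continuous g := continuous_finset_sum _ fun i _ =>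
      (continuous_abs.comp (continuous_apply i)).rpow_const
        fun x => Or.inr (one_div_pos.mpr (hα i)).le
    have hgnn : ∀ x, 0 ≤ g x := fun x =>
      Finset.sum_nonneg fun i _ => Real.rpow_nonneg (abs_nonneg _) _
    have hgzero : ∀ x : Fin N → ℝ, g x = 0 ↔ x = 0 := by
      intro x
      constructor
      · intro h
        funext i
        have hi := (Finset.sum_eq_zero_iff_of_nonneg
          (fun i _ => Real.rpow_nonneg (abs_nonneg (x i)) _)).mp h i (Finset.mem_univ i)
        have h1 : (1:ℝ)/α i ≠ 0 := (one_div_pos.mpr (hα i)).ne'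
        have := (Real.rpow_eq_zero_iff_of_nonneg (abs_nonneg (x i))).mp hi
        simpa using this.1
      · intro h; subst h
        exact Finset.sum_eq_zero fun i _ => by
          rw [Pi.zero_apply, abs_zero, Real.zero_rpow (one_div_pos.mpr (hα i)).ne']
    have hgscal : ∀ ω : ℝ, 0 < ω → ∀ x, g (fun i => ω ^ (α i) * x i) = ω * g x := by
      intro ω hω x
      simp only [hg]
      rw [Finset.mul_sum]
      refine Finset.sum_congr rfl fun i _ => ?_
      have hpos : 0 < ω ^ α i := Real.rpow_pos_of_pos hω _
      rw [abs_mul, abs_of_pos hpos, Real.mul_rpow hpos.le (abs_nonneg _),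
        ← Real.rpow_mul hω.le, mul_one_div_cancel (hα i).ne', Real.rpow_one]
    set S : Set (Fin N → ℝ) := {x | g x = 1} with hS
    have hSclosed : IsClosed S := isClosed_eq hgcont continuous_const
    have hSsub : S ⊆ Metric.closedBall 0 1 := by
      intro x hx
      have hx' : g x = 1 := hx
      rw [Metric.mem_closedBall, dist_zero_right]
      refine (pi_norm_le_iff_of_nonneg zero_le_one).mpr fun i => ?_
      rw [Real.norm_eq_abs]
      by_contra hgt
      push_neg at hgt
      have h1 : 1 < |x i| ^ (1/α i) :=
        (Real.one_lt_rpow_iff_of_pos (lt_trans one_pos hgt)).mpr (Or.inl ⟨hgt, one_div_pos.mpr (hα i)⟩)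
      have hle : |x i| ^ (1/α i) ≤ g x :=
        Finset.single_le_sum (f := fun j => |x j| ^ (1/α j))
          (fun j _ => Real.rpow_nonneg (abs_nonneg _) _) (Finset.mem_univ i)
      rw [hx'] at hle
      linarith
    have hScompact : IsCompact S :=
      (isCompact_closedBall (0 : Fin N → ℝ) 1).of_isClosed_subset hSclosed hSsub
    have hSne : S.Nonempty := by
      refine ⟨fun j => if j = ⟨0, hN⟩ then 1 else 0, ?_⟩
      show g _ = 1
      simp only [hg]
      rw [Finset.sum_eq_single (⟨0, hN⟩ : Fin N)]
      · simp
      · intro j _ hj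
        rw [if_neg hj, abs_zero, Real.zero_rpow (one_div_pos.mpr (hα j)).ne']
      · simp
    obtain ⟨a, haS, hamin⟩ := hScompact.exists_isMinOn hSne hcont.continuousOn
    obtain ⟨b, hbS, hbmax⟩ := hScompact.exists_isMaxOn hSne hcont.continuousOn
    have hfa : 0 < f a := by
      rcases (hnonneg a).lt_or_eq with h | h
      · exact h
      · exfalso
        have ha0 : a = 0 := (hzero a).mp h.symm
        have hga : g a = 1 := haS
        rw [ha0, (hgzero 0).mpr rfl] at hga
        exact one_ne_zero hga.symm
    have hfb : 0 < f b := lt_of_lt_of_le hfa (isMinOn_iff.mp hamin b hbS)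
    refine ⟨f a, f b, hfa, hfb, fun x => ?_⟩
    show f a * g x ^ H ≤ f x ∧ f x ≤ f b * g x ^ H
    rcases eq_or_ne x 0 with rfl | hx
    · have h0 : f 0 = 0 := (hzero 0).mpr rfl
      have hg0 : g 0 = 0 := (hgzero 0).mpr rfl
      rw [h0, hg0, Real.zero_rpow hH.ne']
      simp
    · have hr : 0 < g x := (hgnn x).lt_of_ne fun h => hx ((hgzero x).mp h.symm)
      have hωpos : 0 < (g x)⁻¹ := inv_pos.mpr hr
      set y : Fin N → ℝ := fun i => (g x)⁻¹ ^ (α i) * x i with hy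
      have hyS : y ∈ S := by
        show g y = 1
        rw [hy, hgscal _ hωpos, inv_mul_cancel₀ hr.ne']
      have hfy : f y = (g x)⁻¹ ^ H * f x := hscal _ hωpos x
      have hfx : f x = g x ^ H * f y := by
        rw [hfy, Real.inv_rpow hr.le, ← mul_assoc,
          mul_inv_cancel₀ (Real.rpow_pos_of_pos hr H).ne', one_mul]
      constructor
      · rw [hfx, mul_comm (g x ^ H)]
        exact mul_le_mul_of_nonneg_right (isMinOn_iff.mp hamin y hyS)
          (Real.rpow_pos_of_pos hr H).le
      · rw [hfx, mul_comm (g x ^ H)]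
        exact mul_le_mul_of_nonneg_right (isMaxOn_iff.mp hbmax y hyS)
          (Real.rpow_pos_of_pos hr H).le
end

section
/- Let α₁,…,α_N ≥ 1 with N ≥ 2 and ∑ᵢ αᵢ ≥ 2. For the metric d(x,y) = ∑ᵢ |xᵢ−yᵢ|^{1/αᵢ} on [0,1]^N, the worst-case length of nearest-neighbor tours through any n points of [0,1]^N satisfies 𝕃(n, [0,1]^N) ≤ c_α · n^{1 − 1/(∑ᵢ αᵢ)}, where c_α depends only on α. -/
open Finset

private lemma nn_tele_sum (n : ℕ) (p : ℝ) (hp : 0 < p) (hp1 : p < 1) :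
    ∑ v ∈ Finset.range n, ((v : ℝ) + 1) ^ (-p) ≤ (n : ℝ) ^ (1 - p) / (1 - p) := by
  have hq : (0:ℝ) < 1 - p := by linarith
  have key : ∀ v : ℕ, (1-p) * ((v : ℝ) + 1) ^ (-p) ≤
      (((v+1 : ℕ) : ℝ)) ^ (1-p) - ((v:ℝ)) ^ (1-p) := by
    intro v
    rcases Nat.eq_zero_or_pos v with h0 | h1
    · subst h0
      simp [Real.zero_rpow (ne_of_gt hq), Real.one_rpow]
      linarith
    · have hy : (0:ℝ) < v := by exact_mod_cast h1
      have hx : (0:ℝ) < (v:ℝ) + 1 := by linarith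
      set x : ℝ := (v:ℝ) + 1 with hxdef
      set y : ℝ := (v:ℝ) with hydef
      set s : ℝ := y / x - 1 with hsdef
      have hs1 : -1 ≤ s := by
        have : 0 ≤ y / x := le_of_lt (div_pos hy hx)
        simp [hsdef]; linarith
      have hsne : s ≠ 0 := by
        have : y / x < 1 := by rw [div_lt_one hx]; simp [hxdef, hydef]
        simp only [hsdef]; intro h
        have : y / x = 1 := by linarith
        linarith
      have hbern := rpow_one_add_lt_one_add_mul_self hs1 hsne hq (by linarith)
      have h1s : 1 + s = y / x := by simp [hsdef]
      rw [h1s] at hbern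
      have hxq : 0 < x ^ (1-p) := Real.rpow_pos_of_pos hx _
      have hyq : y ^ (1-p) = x ^ (1-p) * (y/x) ^ (1-p) := by
        have hyx : y = x * (y / x) := by field_simp
        conv_lhs => rw [hyx]
        exact Real.mul_rpow (le_of_lt hx) (le_of_lt (div_pos hy hx))
      have hmain : y ^ (1-p) < x ^ (1-p) - (1-p) * x ^ (-p) := by
        have h2 : x ^ (1-p) * (1 - y/x) = x ^ (-p) := by
          have h3 : 1 - y / x = 1 / x := by
            field_simp
            rw [hxdef]; ring
          rw [h3, mul_one_div, ← Real.rpow_sub_one (ne_of_gt hx)]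
          ring_nf
        have h4 : x ^ (1-p) * (y/x) ^ (1-p) < x ^ (1-p) * (1 + (1-p) * s) :=
          mul_lt_mul_of_pos_left hbern hxq
        have h5 : x ^ (1-p) * (1 + (1-p) * s) = x ^ (1-p) - (1-p) * (x ^ (1-p) * (1 - y/x)) := by
          simp only [hsdef]; ring
        rw [hyq]
        calc x ^ (1-p) * (y/x) ^ (1-p) < x ^ (1-p) * (1 + (1-p)*s) := h4
          _ = x ^ (1-p) - (1-p) * (x ^ (1-p) * (1 - y/x)) := h5
          _ = x ^ (1-p) - (1-p) * x ^ (-p) := by rw [h2]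
      push_cast
      have hcast : ((v:ℝ)+1) = x := rfl
      rw [hcast]
      linarith
  have hsum : ∑ v ∈ Finset.range n, (1-p) * ((v : ℝ) + 1) ^ (-p) ≤ (n : ℝ) ^ (1-p) := by
    calc ∑ v ∈ Finset.range n, (1-p) * ((v : ℝ) + 1) ^ (-p)
        ≤ ∑ v ∈ Finset.range n, ((((v+1 : ℕ)) : ℝ) ^ (1-p) - ((v:ℝ)) ^ (1-p)) :=
          Finset.sum_le_sum fun v _ => key v
      _ = (n : ℝ) ^ (1-p) - ((0:ℕ):ℝ) ^ (1-p) :=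
          Finset.sum_range_sub (fun v : ℕ => ((v:ℝ)) ^ (1-p)) n
      _ ≤ (n : ℝ) ^ (1-p) := by simp [Real.zero_rpow (ne_of_gt hq)]
  rw [← Finset.mul_sum] at hsum
  rw [le_div_iff₀ hq]
  linarith [hsum]

private lemma nn_rearrange {ι : Type*} [DecidableEq ι] (g : ℕ → ℝ)
    (hganti : ∀ v w : ℕ, 1 ≤ v → v ≤ w → g w ≤ g v) :
    ∀ (n : ℕ) (s : Finset ι) (m : ι → ℕ), s.card = n →
    (∀ v : ℕ, (s.filter fun k => m k ≤ v).card ≤ v) →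
    ∑ k ∈ s, g (m k) ≤ ∑ v ∈ Finset.range n, g (v + 1) := by
  intro n
  induction n with
  | zero => intro s m hcard _; rw [Finset.card_eq_zero.mp hcard]; simp
  | succ n ih =>
    intro s m hcard hfil
    have hex : ∃ k₀ ∈ s, ¬ m k₀ ≤ n := by
      by_contra h
      push_neg at h
      have heq : (s.filter fun k => m k ≤ n) = s := Finset.filter_true_of_mem h
      have h2 := hfil n
      rw [heq, hcard] at h2
      omega
    obtain ⟨k₀, hk₀s, hk₀⟩ := hex
    have hm : n + 1 ≤ m k₀ := by omega
    have hins : s = insert k₀ (s.erase k₀) := (Finset.insert_erase hk₀s).symm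
    have hcard' : (s.erase k₀).card = n := by
      rw [Finset.card_erase_of_mem hk₀s, hcard]; omega
    have hsum : ∑ k ∈ s, g (m k) = g (m k₀) + ∑ k ∈ s.erase k₀, g (m k) := by
      conv_lhs => rw [hins]
      exact Finset.sum_insert (Finset.notMem_erase _ _)
    have hIH := ih (s.erase k₀) m hcard' (fun v =>
      le_trans (Finset.card_le_card (Finset.filter_subset_filter _ (Finset.erase_subset _ _)))
        (hfil v))
    have hg : g (m k₀) ≤ g (n + 1) := hganti (n+1) (m k₀) (by omega) hm
    rw [hsum, Finset.sum_range_succ]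
    linarith

private lemma nn_packing {N : ℕ} (hN : 1 ≤ N) (α : Fin N → ℝ) (hα : ∀ i, 1 ≤ α i)
    {ι : Type*} [DecidableEq ι] (p : ι → Fin N → ℝ)
    (hp : ∀ k i, p k i ∈ Set.Icc (0:ℝ) 1) (F : Finset ι) {r : ℝ} (hr : 0 < r)
    (hrN : r ≤ 2 * N)
    (hsep : ∀ k ∈ F, ∀ k' ∈ F, k ≠ k' → r ≤ ∑ j, |p k j - p k' j| ^ (1 / α j)) :
    (F.card : ℝ) ≤ 2 ^ N * (2 * N / r) ^ (∑ i, α i) := by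
  have hNR : (0:ℝ) < 2 * N := by
    have : (1:ℝ) ≤ N := by exact_mod_cast hN
    linarith
  have hb1 : (1:ℝ) ≤ 2 * N / r := (one_le_div hr).mpr hrN
  set M : Fin N → ℕ := fun i => ⌈(2 * N / r) ^ (α i)⌉₊ with hM
  have hx1 : ∀ i, (1:ℝ) ≤ (2 * N / r) ^ (α i) := fun i =>
    Real.one_le_rpow hb1 (by linarith [hα i])
  have hM1 : ∀ i, 1 ≤ M i := fun i => by
    have := hx1 i
    exact Nat.one_le_iff_ne_zero.mpr (by
      intro h
      have := Nat.ceil_eq_zero.mp h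
      linarith)
  have hMle : ∀ i, ((M i : ℝ)) ≤ 2 * (2 * N / r) ^ (α i) := fun i => by
    have h1 : ((M i : ℝ)) < (2 * N / r) ^ (α i) + 1 :=
      Nat.ceil_lt_add_one (by linarith [hx1 i])
    linarith [hx1 i]
  have hMge : ∀ i, (2 * N / r) ^ (α i) ≤ (M i : ℝ) := fun i => Nat.le_ceil _
  set φ : ι → (Fin N → ℕ) := fun k i => min ⌊p k i * M i⌋₊ (M i - 1) with hφ
  have hmaps : ∀ k ∈ F, φ k ∈ Fintype.piFinset (fun i => Finset.range (M i)) := by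
    intro k _
    rw [Fintype.mem_piFinset]
    intro i
    rw [Finset.mem_range]
    have := hM1 i
    exact lt_of_le_of_lt (min_le_right _ _) (by omega)
  by_contra hcon
  push_neg at hcon
  have hcard : (Fintype.piFinset (fun i => Finset.range (M i))).card < F.card := by
    have hc : ((Fintype.piFinset (fun i => Finset.range (M i))).card : ℝ) < F.card := by
      calc ((Fintype.piFinset (fun i => Finset.range (M i))).card : ℝ)
          = ∏ i, (M i : ℝ) := by
            rw [Fintype.card_piFinset]; push_cast; simp
        _ ≤ ∏ i, 2 * (2 * N / r) ^ (α i) := by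
            apply Finset.prod_le_prod
            · intro i _; positivity
            · intro i _; exact hMle i
        _ = 2 ^ N * (2 * N / r) ^ (∑ i, α i) := by
            rw [Finset.prod_mul_distrib, Finset.prod_const,
              ← Real.rpow_sum_of_pos (by positivity : (0:ℝ) < 2 * N / r)]
            simp
        _ < F.card := hcon
    exact_mod_cast hc
  obtain ⟨k₁, hk₁, k₂, hk₂, hne, heq⟩ :=
    Finset.exists_ne_map_eq_of_card_lt_of_maps_to hcard hmaps
  have hclose : ∀ i, |p k₁ i - p k₂ i| ≤ 1 / M i := by
    intro i
    have hMpos : (0:ℝ) < M i := by exact_mod_cast hM1 i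
    have key : ∀ x : ℝ, x ∈ Set.Icc (0:ℝ) 1 →
        (((min ⌊x * M i⌋₊ (M i - 1) : ℕ)) : ℝ) ≤ x * M i ∧
        x * M i ≤ ((min ⌊x * M i⌋₊ (M i - 1) : ℕ) : ℝ) + 1 := by
      intro x hx
      have hx0 : 0 ≤ x * M i := mul_nonneg hx.1 (le_of_lt hMpos)
      have hxM : x * M i ≤ M i := by
        nlinarith [hx.2]
      rcases le_or_gt ⌊x * M i⌋₊ (M i - 1) with hfl | hfl
      · rw [min_eq_left hfl]
        constructor
        · exact Nat.floor_le hx0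
        · exact le_of_lt (Nat.lt_floor_add_one _)
      · rw [min_eq_right (le_of_lt hfl)]
        have hMfloor : M i ≤ ⌊x * M i⌋₊ := by omega
        have : (M i : ℝ) ≤ x * M i := by
          exact_mod_cast (Nat.le_floor_iff hx0).mp hMfloor
        have hxeq : x * M i = M i := le_antisymm hxM this
        have hcast : (((M i - 1 : ℕ)) : ℝ) = (M i : ℝ) - 1 := by
          have := hM1 i
          push_cast [Nat.cast_sub this]
          ring
        rw [hxeq, hcast]
        constructor <;> linarith
    have h1 := key (p k₁ i) (hp k₁ i)
    have h2 := key (p k₂ i) (hp k₂ i)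
    have heqi : (φ k₁) i = (φ k₂) i := by rw [heq]
    simp only [hφ] at heqi
    rw [heqi] at h1
    have hdiff : |p k₁ i - p k₂ i| * M i ≤ 1 := by
      have habs : |p k₁ i - p k₂ i| * M i = |p k₁ i * M i - p k₂ i * M i| := by
        rw [← sub_mul, abs_mul, abs_of_pos hMpos]
      rw [habs, abs_sub_le_iff]
      constructor <;> nlinarith [h1.1, h1.2, h2.1, h2.2]
    rw [le_div_iff₀ hMpos]
    exact hdiff
  have hdist : ∑ j, |p k₁ j - p k₂ j| ^ (1 / α j) ≤ r / 2 := by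
    have hterm : ∀ j, |p k₁ j - p k₂ j| ^ (1 / α j) ≤ r / (2 * N) := by
      intro j
      have hαj := hα j
      have hMj : (1:ℝ) / M j ≤ (r / (2*N)) ^ (α j) := by
        have h1 : (r / (2*N)) ^ (α j) = ((2 * N / r) ^ (α j))⁻¹ := by
          rw [← Real.inv_rpow (by positivity)]
          congr 1
          field_simp
        rw [h1, one_div]
        exact inv_anti₀ (by positivity) (hMge j)
      have h2 : |p k₁ j - p k₂ j| ^ (1 / α j) ≤ ((r / (2*N)) ^ (α j)) ^ (1 / α j) := by
        apply Real.rpow_le_rpow (abs_nonneg _) _ (by positivity)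
        calc |p k₁ j - p k₂ j| ≤ 1 / M j := hclose j
          _ ≤ (r / (2*N)) ^ (α j) := hMj
      calc |p k₁ j - p k₂ j| ^ (1 / α j) ≤ ((r / (2*N)) ^ (α j)) ^ (1 / α j) := h2
        _ = r / (2*N) := by
            rw [← Real.rpow_mul (by positivity), mul_one_div,
              div_self (by linarith : α j ≠ 0), Real.rpow_one]
    calc ∑ j, |p k₁ j - p k₂ j| ^ (1 / α j) ≤ ∑ _j : Fin N, r / (2*N) :=
          Finset.sum_le_sum fun j _ => hterm j
      _ = N * (r / (2*N)) := by rw [Finset.sum_const]; simp [mul_comm]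
      _ = r / 2 := by field_simp
  have := hsep k₁ hk₁ k₂ hk₂ hne
  linarith

/-- Worst-case nearest-neighbor tour length bound in `[0,1]^N` for the α-metric
`d(x,y) = ∑ᵢ |xᵢ - yᵢ|^(1/αᵢ)`: any nearest-neighbor tour through `n` points of `[0,1]^N`
(closed by a final hop to the origin) has length at most `c_α · n^(1 - 1/∑αᵢ)`. -/
theorem stmt15 (N : ℕ) (hN : 2 ≤ N) (α : Fin N → ℝ) (hα : ∀ i, 1 ≤ α i)
    (hsum : 2 ≤ ∑ i, α i) :
    ∃ c : ℝ, 0 < c ∧ ∀ (n : ℕ) (t : Fin n → Fin N → ℝ),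
      (∀ k i, t k i ∈ Set.Icc (0 : ℝ) 1) →
      Function.Injective t →
      (∀ (k : Fin n) (hk : (k : ℕ) + 1 < n) (i : Fin n), (k : ℕ) < (i : ℕ) →
        (∑ j, |t k j - t ⟨(k : ℕ) + 1, hk⟩ j| ^ (1 / α j)) ≤
          ∑ j, |t k j - t i j| ^ (1 / α j)) →
      (∑ k : Fin n, ∑ j,
          |(Fin.snoc t (0 : Fin N → ℝ) : Fin (n + 1) → Fin N → ℝ) k.succ j -
            (Fin.snoc t (0 : Fin N → ℝ) : Fin (n + 1) → Fin N → ℝ) k.castSucc j| ^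
              (1 / α j)) ≤
        c * (n : ℝ) ^ (1 - 1 / ∑ i, α i) := by
  classical
  set S : ℝ := ∑ i, α i with hSdef
  have hS2 : (2:ℝ) ≤ S := hsum
  have hSpos : (0:ℝ) < S := by linarith
  have hppos : (0:ℝ) < 1 / S := by positivity
  have hple : 1 / S ≤ 1 / 2 := by
    apply div_le_div_of_nonneg_left (by norm_num) (by norm_num) hS2
  have hp1 : 1 / S < 1 := by linarith
  have hq : (0:ℝ) < 1 - 1/S := by linarith
  have hNpos : (0:ℝ) < N := by
    have : (2:ℝ) ≤ N := by exact_mod_cast hN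
    linarith
  set C : ℝ := 2 ^ N * (2 * N) ^ S with hCdef
  have hCpos : 0 < C := by
    apply mul_pos (by positivity)
    exact Real.rpow_pos_of_pos (by linarith) _
  refine ⟨2 * C ^ (1/S) + N, by positivity, ?_⟩
  intro n t hbox hinj hNN
  set d : (Fin N → ℝ) → (Fin N → ℝ) → ℝ :=
    fun x y => ∑ j, |x j - y j| ^ (1 / α j) with hd
  have hd0 : ∀ x y, 0 ≤ d x y := fun x y =>
    Finset.sum_nonneg fun j _ => Real.rpow_nonneg (abs_nonneg _) _
  have hdsymm : ∀ x y, d x y = d y x := by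
    intro x y; simp only [hd]; exact Finset.sum_congr rfl fun j _ => by rw [abs_sub_comm]
  have hdleN : ∀ x y, (∀ j, x j ∈ Set.Icc (0:ℝ) 1) → (∀ j, y j ∈ Set.Icc (0:ℝ) 1) →
      d x y ≤ N := by
    intro x y hx hy
    have hterm : ∀ j, |x j - y j| ^ (1 / α j) ≤ 1 := by
      intro j
      apply Real.rpow_le_one (abs_nonneg _) _
        (div_nonneg zero_le_one (by linarith [hα j]))
      rw [abs_le]
      exact ⟨by linarith [(hx j).1, (hy j).2], by linarith [(hx j).2, (hy j).1]⟩
    calc d x y ≤ ∑ _j : Fin N, (1:ℝ) := Finset.sum_le_sum fun j _ => hterm j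
      _ = N := by simp
  set len : Fin n → ℝ := fun k =>
    if h : (k:ℕ) + 1 < n then d (t k) (t ⟨(k:ℕ)+1, h⟩) else d (t k) 0 with hlen
  have hlen0 : ∀ k, 0 ≤ len k := by
    intro k; simp only [hlen]; split <;> exact hd0 _ _
  have hlenN : ∀ k, len k ≤ N := by
    intro k; simp only [hlen]; split
    · exact hdleN _ _ (fun j => hbox k j) (fun j => hbox _ j)
    · exact hdleN _ _ (fun j => hbox k j) (fun j => by simp [Set.mem_Icc])
  have hLHS : (∑ k : Fin n, ∑ j,
      |(Fin.snoc t (0 : Fin N → ℝ) : Fin (n + 1) → Fin N → ℝ) k.succ j -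
        (Fin.snoc t (0 : Fin N → ℝ) : Fin (n + 1) → Fin N → ℝ) k.castSucc j| ^
          (1 / α j)) = ∑ k : Fin n, len k := by
    apply Finset.sum_congr rfl
    intro k _
    by_cases h : (k:ℕ) + 1 < n
    · have hsucc : (k.succ : Fin (n+1)) = Fin.castSucc ⟨(k:ℕ)+1, h⟩ := by
        ext; simp [Fin.val_succ]
      rw [hsucc]
      simp only [Fin.snoc_castSucc, hlen, dif_pos h, hd]
      exact Finset.sum_congr rfl fun j _ => by rw [abs_sub_comm]
    · have hsucc : (k.succ : Fin (n+1)) = Fin.last n := by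
        ext; simp only [Fin.val_succ, Fin.val_last]; omega
      rw [hsucc, Fin.snoc_last]
      simp only [Fin.snoc_castSucc, hlen, dif_neg h, hd, Pi.zero_apply]
      exact Finset.sum_congr rfl fun j _ => by rw [abs_sub_comm]
  rw [hLHS]
  rcases Nat.eq_zero_or_pos n with hn0 | hn1
  · subst hn0
    simp only [Finset.univ_eq_empty, Finset.sum_empty]
    positivity
  have hn1R : (1:ℝ) ≤ n := by exact_mod_cast hn1
  have hnq1 : (1:ℝ) ≤ (n:ℝ) ^ (1 - 1/S) := Real.one_le_rpow hn1R (le_of_lt hq)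
  set Kf : Finset (Fin n) := Finset.univ.filter (fun k => (k:ℕ) + 1 < n) with hKf
  have hsplit : ∑ k : Fin n, len k =
      ∑ k ∈ Kf, len k + ∑ k ∈ Finset.univ.filter (fun k : Fin n => ¬ ((k:ℕ)+1 < n)), len k :=
    (Finset.sum_filter_add_sum_filter_not _ _ _).symm
  have htail : ∑ k ∈ Finset.univ.filter (fun k : Fin n => ¬ ((k:ℕ)+1 < n)), len k ≤ N := by
    have hc1 : (Finset.univ.filter (fun k : Fin n => ¬ ((k:ℕ)+1 < n))).card ≤ 1 := by
      apply Finset.card_le_one.mpr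
      intro a ha b hb
      simp only [Finset.mem_filter] at ha hb
      have ha2 := a.isLt
      have hb2 := b.isLt
      ext
      omega
    calc ∑ k ∈ Finset.univ.filter (fun k : Fin n => ¬ ((k:ℕ)+1 < n)), len k
        ≤ (Finset.univ.filter (fun k : Fin n => ¬ ((k:ℕ)+1 < n))).card • (N:ℝ) :=
          Finset.sum_le_card_nsmul _ _ _ (fun k _ => hlenN k)
      _ ≤ (N:ℝ) := by
          rcases Nat.le_one_iff_eq_zero_or_eq_one.mp hc1 with h | h <;> rw [h] <;> simp
  have hNNlen : ∀ k ∈ Kf, ∀ i : Fin n, (k:ℕ) < (i:ℕ) → len k ≤ d (t k) (t i) := by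
    intro k hk i hi
    have hkn : (k:ℕ) + 1 < n := (Finset.mem_filter.mp hk).2
    simp only [hlen, dif_pos hkn]
    exact hNN k hkn i hi
  set m : Fin n → ℕ := fun k => (Kf.filter (fun k' => len k ≤ len k')).card with hm
  have hm1 : ∀ k ∈ Kf, 1 ≤ m k := by
    intro k hk
    apply Finset.card_pos.mpr
    exact ⟨k, Finset.mem_filter.mpr ⟨hk, le_refl _⟩⟩
  have hkey : ∀ k ∈ Kf, len k ≠ 0 → len k ≤ (C / m k) ^ (1/S) := by
    intro k hk hne0
    have hrpos : 0 < len k := lt_of_le_of_ne (hlen0 k) (Ne.symm hne0)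
    have hr2N : len k ≤ 2 * N := by
      have := hlenN k; linarith
    have hsep : ∀ k₁ ∈ (Kf.filter (fun k' => len k ≤ len k')), ∀ k₂ ∈
        (Kf.filter (fun k' => len k ≤ len k')), k₁ ≠ k₂ →
        len k ≤ ∑ j, |t k₁ j - t k₂ j| ^ (1 / α j) := by
      intro k₁ hk₁ k₂ hk₂ hne
      have h1 := Finset.mem_filter.mp hk₁
      have h2 := Finset.mem_filter.mp hk₂
      rcases lt_trichotomy (k₁:ℕ) (k₂:ℕ) with hlt | heq | hgt
      · calc len k ≤ len k₁ := h1.2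
          _ ≤ d (t k₁) (t k₂) := hNNlen k₁ h1.1 k₂ hlt
          _ = _ := rfl
      · exact absurd (Fin.ext heq) hne
      · calc len k ≤ len k₂ := h2.2
          _ ≤ d (t k₂) (t k₁) := hNNlen k₂ h2.1 k₁ hgt
          _ = ∑ j, |t k₁ j - t k₂ j| ^ (1 / α j) := hdsymm _ _
    have hpack := nn_packing (by omega : 1 ≤ N) α hα t hbox
      (Kf.filter (fun k' => len k ≤ len k')) hrpos hr2N hsep
    have hmpos : (0:ℝ) < m k := by exact_mod_cast hm1 k hk
    have hdiv : (2 * N / len k) ^ S = (2*N) ^ S / (len k) ^ S :=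
      Real.div_rpow (by linarith) (le_of_lt hrpos) S
    have hmC : (m k : ℝ) ≤ C / (len k) ^ S := by
      calc (m k : ℝ) ≤ 2 ^ N * (2 * N / len k) ^ S := hpack
        _ = C / (len k) ^ S := by rw [hdiv, hCdef]; ring
    have hrS : (len k) ^ S ≤ C / m k := by
      rw [le_div_iff₀ hmpos]
      have hrSpos : (0:ℝ) < (len k) ^ S := Real.rpow_pos_of_pos hrpos _
      rw [div_eq_mul_inv] at hmC
      calc (len k) ^ S * m k ≤ (len k) ^ S * (C * ((len k) ^ S)⁻¹) :=
            mul_le_mul_of_nonneg_left hmC (le_of_lt hrSpos)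
        _ = C := by field_simp
    calc len k = ((len k) ^ S) ^ (1/S) := by
          rw [← Real.rpow_mul (le_of_lt hrpos), mul_one_div, div_self (ne_of_gt hSpos),
            Real.rpow_one]
      _ ≤ (C / m k) ^ (1/S) :=
          Real.rpow_le_rpow (Real.rpow_nonneg (le_of_lt hrpos) _) hrS (le_of_lt hppos)
  set s : Finset (Fin n) := Kf.filter (fun k => len k ≠ 0) with hs
  have hsumKf : ∑ k ∈ Kf, len k = ∑ k ∈ s, len k := (Finset.sum_filter_ne_zero Kf).symm
  set g : ℕ → ℝ := fun v => C ^ (1/S) * ((v:ℝ)) ^ (-(1/S)) with hg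
  have hganti : ∀ v w : ℕ, 1 ≤ v → v ≤ w → g w ≤ g v := by
    intro v w hv hvw
    simp only [hg]
    have hv' : (0:ℝ) < v := by exact_mod_cast hv
    have hvw' : (v:ℝ) ≤ w := by exact_mod_cast hvw
    exact mul_le_mul_of_nonneg_left
      (Real.rpow_le_rpow_of_nonpos hv' hvw' (by linarith))
      (le_of_lt (Real.rpow_pos_of_pos hCpos _))
  have hlen_le_g : ∀ k ∈ s, len k ≤ g (m k) := by
    intro k hk
    have hks := Finset.mem_filter.mp hk
    have hmpos : (0:ℝ) < m k := by exact_mod_cast hm1 k hks.1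
    have heq : (C / m k) ^ (1/S) = g (m k) := by
      simp only [hg]
      rw [Real.div_rpow (le_of_lt hCpos) (le_of_lt hmpos),
        Real.rpow_neg (le_of_lt hmpos), div_eq_mul_inv]
    rw [← heq]
    exact hkey k hks.1 hks.2
  have hcardfil : ∀ v : ℕ, (s.filter fun k => m k ≤ v).card ≤ v := by
    intro v
    rcases Finset.eq_empty_or_nonempty (s.filter fun k => m k ≤ v) with he | hne
    · rw [he]; simp
    · obtain ⟨k₀, hk₀mem, hk₀min⟩ := Finset.exists_min_image _ len hne
      have hk₀f := Finset.mem_filter.mp hk₀mem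
      have hk₀s := Finset.mem_filter.mp hk₀f.1
      have hsub : (s.filter fun k => m k ≤ v) ⊆ Kf.filter (fun k' => len k₀ ≤ len k') := by
        intro k hkk
        have hkf := Finset.mem_filter.mp hkk
        have hkss := Finset.mem_filter.mp hkf.1
        exact Finset.mem_filter.mpr ⟨hkss.1, hk₀min k hkk⟩
      calc (s.filter fun k => m k ≤ v).card
          ≤ (Kf.filter (fun k' => len k₀ ≤ len k')).card := Finset.card_le_card hsub
        _ = m k₀ := rfl
        _ ≤ v := hk₀f.2
  have hinterior : ∑ k ∈ s, len k ≤ 2 * C ^ (1/S) * (n:ℝ) ^ (1 - 1/S) := by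
    have hcards : (s.card : ℝ) ≤ n := by
      have : s.card ≤ n := by
        calc s.card ≤ (Finset.univ : Finset (Fin n)).card :=
              Finset.card_le_card (by intro x hx; exact Finset.mem_univ x)
          _ = n := Finset.card_fin n
      exact_mod_cast this
    calc ∑ k ∈ s, len k ≤ ∑ k ∈ s, g (m k) := Finset.sum_le_sum hlen_le_g
      _ ≤ ∑ v ∈ Finset.range s.card, g (v+1) := nn_rearrange g hganti s.card s m rfl hcardfil
      _ = C ^ (1/S) * ∑ v ∈ Finset.range s.card, ((v:ℝ)+1) ^ (-(1/S)) := by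
          rw [Finset.mul_sum]
          exact Finset.sum_congr rfl fun v _ => by simp only [hg]; push_cast; ring_nf
      _ ≤ C ^ (1/S) * ((s.card:ℝ) ^ (1 - 1/S) / (1 - 1/S)) :=
          mul_le_mul_of_nonneg_left (nn_tele_sum s.card (1/S) hppos hp1)
            (le_of_lt (Real.rpow_pos_of_pos hCpos _))
      _ ≤ 2 * C ^ (1/S) * (n:ℝ) ^ (1 - 1/S) := by
          have h1 : (s.card:ℝ) ^ (1 - 1/S) ≤ (n:ℝ) ^ (1 - 1/S) :=
            Real.rpow_le_rpow (Nat.cast_nonneg _) hcards (le_of_lt hq)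
          have h2 : (0:ℝ) < 1 - 1/S := hq
          have h3 : 1 / (1 - 1/S) ≤ 2 := by
            rw [div_le_iff₀ h2]
            linarith
          have h4 : (0:ℝ) ≤ C ^ (1/S) := le_of_lt (Real.rpow_pos_of_pos hCpos _)
          have h5 : (s.card:ℝ) ^ (1 - 1/S) / (1 - 1/S) ≤ 2 * (n:ℝ) ^ (1 - 1/S) := by
            rw [div_le_iff₀ h2]
            have h6 : (0:ℝ) ≤ (n:ℝ) ^ (1 - 1/S) := by positivity
            nlinarith
          calc C ^ (1/S) * ((s.card:ℝ) ^ (1 - 1/S) / (1 - 1/S))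
              ≤ C ^ (1/S) * (2 * (n:ℝ) ^ (1 - 1/S)) := mul_le_mul_of_nonneg_left h5 h4
            _ = 2 * C ^ (1/S) * (n:ℝ) ^ (1 - 1/S) := by ring
  rw [hsplit, hsumKf]
  have hNn : (N:ℝ) ≤ N * (n:ℝ) ^ (1 - 1/S) := by
    nlinarith
  calc ∑ k ∈ s, len k + ∑ k ∈ Finset.univ.filter (fun k : Fin n => ¬ ((k:ℕ)+1 < n)), len k
      ≤ 2 * C ^ (1/S) * (n:ℝ) ^ (1 - 1/S) + N := by linarith
    _ ≤ (2 * C ^ (1/S) + N) * (n:ℝ) ^ (1 - 1/S) := by nlinarith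
end

section
/- Let α₁,…,α_N > 0, H > 0, η > 0, and β > 0 with ∑ᵢ αᵢ > βH. Then for every k ∈ ℕ, the integral ∫_{ℝ^N} exp(−k^{1/∑αᵢ} ‖y‖_α) / ‖y‖_α^{βH} dy is finite and equals C · k^{βH/∑αᵢ − 1}, where C = C(N, α, β, H) > 0 is independent of k and ‖y‖_α = ∑ᵢ |yᵢ|^{1/αᵢ}. -/
/-!
The anisotropic dilation `y ↦ (t ^ αᵢ * yᵢ)ᵢ` multiplies `‖y‖_α` by `t` and Lebesgue measure by
`t ^ ∑ αᵢ`; substituting `t = c⁻¹` gives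
`∫ exp (-c ‖y‖_α) / ‖y‖_α ^ s = c ^ (s - ∑ αᵢ) * ∫ exp (-‖y‖_α) / ‖y‖_α ^ s`,
and `c = k ^ (1 / ∑ αᵢ)` yields the power of `k`.
For finiteness put `θ = s / ∑ αᵢ < 1`: since every `|yᵢ| ^ (1 / αᵢ)` is at most `‖y‖_α`,
we have `∏ |yᵢ| ^ θ ≤ ‖y‖_α ^ s`, so the integrand is dominated by the product of the
one-dimensional Gamma-type integrable functions `|t| ^ (-θ) * exp (-c |t| ^ (1 / αᵢ))`.
-/

open MeasureTheory Real Set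

theorem integrable_comp_abs_of_integrableOn_Ioi {E : Type*} [NormedAddCommGroup E] {f : ℝ → E}
    (hf : IntegrableOn f (Ioi 0)) : Integrable (fun x => f |x|) := by
  have hIoi : IntegrableOn (fun x => f |x|) (Ioi 0) :=
    hf.congr_fun (fun x hx => by rw [abs_of_pos (show (0 : ℝ) < x from hx)]) measurableSet_Ioi
  have hIic : IntegrableOn (fun x => f |x|) (Iic 0) := by
    have hneg : MeasurableEmbedding fun x : ℝ => -x := (Homeomorph.neg ℝ).measurableEmbedding
    rw [← Measure.map_neg_eq_self (volume : Measure ℝ), hneg.integrableOn_map_iff]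
    simp_rw [Function.comp_def, abs_neg, neg_preimage, neg_Iic, neg_zero]
    exact (integrableOn_Ici_iff_integrableOn_Ioi).mpr hIoi
  rw [← integrableOn_univ, ← Iic_union_Ioi (a := (0 : ℝ))]
  exact hIic.union hIoi

theorem integrable_abs_rpow_neg_mul_exp_neg_mul_abs_rpow {θ p b : ℝ} (hθ : θ < 1) (hp : 0 < p)
    (hb : 0 < b) : Integrable (fun t : ℝ => |t| ^ (-θ) * exp (-b * |t| ^ p)) :=
  integrable_comp_abs_of_integrableOn_Ioi
    (integrableOn_rpow_mul_exp_neg_mul_rpow (by linarith) hp hb)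

theorem integral_comp_mul_pi {ι E : Type*} [Fintype ι] [NormedAddCommGroup E] [NormedSpace ℝ E]
    {d : ι → ℝ} (hd : ∀ i, d i ≠ 0) (F : (ι → ℝ) → E) :
    ∫ y : ι → ℝ, F (fun i => d i * y i) = |∏ i, d i|⁻¹ • ∫ y, F y := by
  classical
  let e := Homeomorph.piCongrRight fun i => Homeomorph.mulLeft₀ (d i) (hd i)
  have he : (e : (ι → ℝ) → ι → ℝ) = Matrix.toLin' (Matrix.diagonal d) := by
    ext y i
    simp [e, Matrix.mulVec_diagonal]
  have hdet : (Matrix.diagonal d).det ≠ 0 := by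
    rw [Matrix.det_diagonal]
    exact Finset.prod_ne_zero_iff.mpr fun i _ => hd i
  have hmap : Measure.map e volume = ENNReal.ofReal |∏ i, d i|⁻¹ • volume := by
    rw [he, Real.map_matrix_volume_pi_eq_smul_volume_pi hdet, Matrix.det_diagonal, abs_inv]
  calc ∫ y : ι → ℝ, F (fun i => d i * y i) = ∫ z, F z ∂(Measure.map e volume) :=
        (e.measurableEmbedding.integral_map F).symm
    _ = |∏ i, d i|⁻¹ • ∫ y, F y := by
        rw [hmap, integral_smul_measure, ENNReal.toReal_ofReal (by positivity)]

section AnisotropicNorm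

variable {ι : Type*} [Fintype ι] {α : ι → ℝ}

noncomputable def anisotropicNorm (α y : ι → ℝ) : ℝ := ∑ i, |y i| ^ (1 / α i)

theorem anisotropicNorm_nonneg (α y : ι → ℝ) : 0 ≤ anisotropicNorm α y :=
  Finset.sum_nonneg fun _ _ => rpow_nonneg (abs_nonneg _) _

theorem abs_rpow_le_anisotropicNorm (α y : ι → ℝ) (i : ι) :
    |y i| ^ (1 / α i) ≤ anisotropicNorm α y :=
  Finset.single_le_sum (f := fun j => |y j| ^ (1 / α j))
    (fun j _ => rpow_nonneg (abs_nonneg (y j)) _) (Finset.mem_univ i)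

theorem anisotropicNorm_pos {y : ι → ℝ} (hy : y ≠ 0) : 0 < anisotropicNorm α y := by
  obtain ⟨i, hi⟩ := Function.ne_iff.mp hy
  exact (rpow_pos_of_pos (abs_pos.mpr hi) _).trans_le (abs_rpow_le_anisotropicNorm α y i)

theorem measurable_anisotropicNorm (α : ι → ℝ) : Measurable (anisotropicNorm α) := by
  unfold anisotropicNorm
  fun_prop

theorem anisotropicNorm_dilate (hα : ∀ i, α i ≠ 0) {t : ℝ} (ht : 0 ≤ t) (y : ι → ℝ) :
    anisotropicNorm α (fun i => t ^ α i * y i) = t * anisotropicNorm α y := by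
  rw [anisotropicNorm, anisotropicNorm, Finset.mul_sum]
  refine Finset.sum_congr rfl fun i _ => ?_
  rw [abs_mul, abs_of_nonneg (rpow_nonneg ht _), mul_rpow (rpow_nonneg ht _) (abs_nonneg _),
    ← rpow_mul ht, mul_one_div_cancel (hα i), rpow_one]

theorem prod_abs_rpow_le_anisotropicNorm_rpow (hα : ∀ i, 0 < α i) {θ : ℝ} (hθ : 0 ≤ θ)
    (y : ι → ℝ) : ∏ i, |y i| ^ θ ≤ anisotropicNorm α y ^ (θ * ∑ i, α i) := by
  rw [Finset.mul_sum, rpow_sum_of_nonneg (anisotropicNorm_nonneg α y)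
    fun i _ => mul_nonneg hθ (hα i).le]
  refine Finset.prod_le_prod (fun i _ => rpow_nonneg (abs_nonneg _) _) fun i _ => ?_
  calc |y i| ^ θ = (|y i| ^ (1 / α i)) ^ (θ * α i) := by
        rw [← rpow_mul (abs_nonneg _), one_div_mul_eq_div, mul_div_cancel_right₀ _ (hα i).ne']
    _ ≤ anisotropicNorm α y ^ (θ * α i) :=
        rpow_le_rpow (rpow_nonneg (abs_nonneg _) _) (abs_rpow_le_anisotropicNorm α y i)
          (mul_nonneg hθ (hα i).le)

theorem integrable_exp_neg_mul_anisotropicNorm_div_rpow (hα : ∀ i, 0 < α i) {c s : ℝ}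
    (hc : 0 < c) (hs₀ : 0 ≤ s) (hs : s < ∑ i, α i) :
    Integrable fun y => exp (-c * anisotropicNorm α y) / anisotropicNorm α y ^ s := by
  set θ := s / ∑ i, α i
  have hA : 0 < ∑ i, α i := hs₀.trans_lt hs
  have hθ : s = θ * ∑ i, α i := (div_mul_cancel₀ s hA.ne').symm
  have hdom : Integrable fun y : ι → ℝ => ∏ i, |y i| ^ (-θ) * exp (-c * |y i| ^ (1 / α i)) :=
    Integrable.fintype_prod fun i => integrable_abs_rpow_neg_mul_exp_neg_mul_abs_rpow
      ((div_lt_one hA).mpr hs) (one_div_pos.mpr (hα i)) hc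
  refine hdom.mono' (((measurable_anisotropicNorm α).const_mul (-c)).exp.div
    ((measurable_anisotropicNorm α).pow_const s)).aestronglyMeasurable ?_
  have hae : ∀ᵐ y : ι → ℝ, ∀ i, y i ≠ 0 :=
    ae_all_iff.mpr fun i => by rw [volume_pi]; exact Measure.ae_eval_ne _ i 0
  filter_upwards [hae] with y hy
  have hprod : 0 < ∏ i, |y i| ^ θ :=
    Finset.prod_pos fun i _ => rpow_pos_of_pos (abs_pos.mpr (hy i)) _
  rw [norm_of_nonneg (div_nonneg (exp_nonneg _) (rpow_nonneg (anisotropicNorm_nonneg α y) _))]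
  calc exp (-c * anisotropicNorm α y) / anisotropicNorm α y ^ s
      ≤ exp (-c * anisotropicNorm α y) / ∏ i, |y i| ^ θ := by
        rw [hθ]
        gcongr
        exact prod_abs_rpow_le_anisotropicNorm_rpow hα (div_nonneg hs₀ hA.le) y
    _ = ∏ i, |y i| ^ (-θ) * exp (-c * |y i| ^ (1 / α i)) := by
        rw [anisotropicNorm, Finset.mul_sum, exp_sum, ← Finset.prod_div_distrib]
        refine Finset.prod_congr rfl fun i _ => ?_
        rw [rpow_neg (abs_nonneg _), div_eq_inv_mul]

theorem integral_exp_neg_mul_anisotropicNorm_div_rpow (hα : ∀ i, 0 < α i) {c : ℝ} (hc : 0 < c)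
    (s : ℝ) :
    ∫ y, exp (-c * anisotropicNorm α y) / anisotropicNorm α y ^ s =
      c ^ (s - ∑ i, α i) * ∫ y, exp (-anisotropicNorm α y) / anisotropicNorm α y ^ s := by
  have hdilate : ∀ y : ι → ℝ,
      exp (-c * anisotropicNorm α fun i => c⁻¹ ^ α i * y i) /
          (anisotropicNorm α fun i => c⁻¹ ^ α i * y i) ^ s =
        c ^ s * (exp (-anisotropicNorm α y) / anisotropicNorm α y ^ s) := by
    intro y
    rw [anisotropicNorm_dilate (fun i => (hα i).ne') (inv_nonneg.mpr hc.le), ← mul_assoc,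
      neg_mul, mul_inv_cancel₀ hc.ne', neg_one_mul, mul_rpow (inv_nonneg.mpr hc.le)
      (anisotropicNorm_nonneg α y), inv_rpow hc.le, div_mul_eq_div_div, div_inv_eq_mul,
      mul_div_right_comm, mul_comm]
  have hscale := integral_comp_mul_pi (fun i => (rpow_pos_of_pos (inv_pos.mpr hc) (α i)).ne')
    fun y => exp (-c * anisotropicNorm α y) / anisotropicNorm α y ^ s
  have hdet : |∏ i, c⁻¹ ^ α i|⁻¹ = c ^ ∑ i, α i := by
    rw [← rpow_sum_of_pos (inv_pos.mpr hc), inv_rpow hc.le, abs_inv, inv_inv,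
      abs_of_pos (rpow_pos_of_pos hc _)]
  rw [hdet, smul_eq_mul] at hscale
  simp only [hdilate, integral_const_mul] at hscale
  rw [rpow_sub hc, div_mul_eq_mul_div, hscale, mul_div_cancel_left₀ _ (rpow_pos_of_pos hc _).ne']

theorem integral_exp_neg_anisotropicNorm_div_rpow_pos [Nonempty ι] (hα : ∀ i, 0 < α i) {s : ℝ}
    (hs₀ : 0 ≤ s) (hs : s < ∑ i, α i) :
    0 < ∫ y, exp (-anisotropicNorm α y) / anisotropicNorm α y ^ s := by
  have hint := integrable_exp_neg_mul_anisotropicNorm_div_rpow hα one_pos hs₀ hs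
  simp only [neg_mul, one_mul] at hint
  rw [integral_pos_iff_support_of_nonneg
    (fun y => div_nonneg (exp_nonneg _) (rpow_nonneg (anisotropicNorm_nonneg α y) _)) hint]
  have hsupp : {(0 : ι → ℝ)}ᶜ ⊆
      Function.support fun y => exp (-anisotropicNorm α y) / anisotropicNorm α y ^ s :=
    fun y hy => (div_pos (exp_pos _) (rpow_pos_of_pos (anisotropicNorm_pos hy) _)).ne'
  exact (isOpen_compl_singleton.measure_pos volume (exists_ne 0)).trans_le (measure_mono hsupp)

end AnisotropicNorm

theorem stmt18_general (N : ℕ) (hN : 0 < N) (α : Fin N → ℝ) (hα : ∀ i, 0 < α i)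
    (H β : ℝ) (hH : 0 < H) (hβ : 0 < β)
    (hsum : β * H < ∑ i, α i) :
    ∃ C : ℝ, 0 < C ∧ ∀ k : ℕ, 0 < k →
      Integrable (fun y : Fin N → ℝ =>
        Real.exp (-((k : ℝ) ^ (1 / ∑ i, α i)) * ∑ i, |y i| ^ (1 / α i)) /
          (∑ i, |y i| ^ (1 / α i)) ^ (β * H)) volume ∧
      (∫ y : Fin N → ℝ,
        Real.exp (-((k : ℝ) ^ (1 / ∑ i, α i)) * ∑ i, |y i| ^ (1 / α i)) /
          (∑ i, |y i| ^ (1 / α i)) ^ (β * H)) =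
        C * (k : ℝ) ^ (β * H / (∑ i, α i) - 1) := by
  have : Nonempty (Fin N) := Fin.pos_iff_nonempty.mp hN
  have hs₀ : 0 ≤ β * H := (mul_pos hβ hH).le
  have hA : 0 < ∑ i, α i := Finset.sum_pos (fun i _ => hα i) Finset.univ_nonempty
  refine ⟨_, integral_exp_neg_anisotropicNorm_div_rpow_pos hα hs₀ hsum, fun k hk => ?_⟩
  have hc : 0 < (k : ℝ) ^ (1 / ∑ i, α i) := rpow_pos_of_pos (Nat.cast_pos.mpr hk) _
  refine ⟨integrable_exp_neg_mul_anisotropicNorm_div_rpow hα hc hs₀ hsum, ?_⟩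
  refine (integral_exp_neg_mul_anisotropicNorm_div_rpow hα hc _).trans ?_
  rw [mul_comm, ← rpow_mul (Nat.cast_nonneg k), one_div_mul_eq_div, sub_div, div_self hA.ne']

/-- For `∑ αᵢ > βH`, the integral
`∫_{ℝ^N} exp(−k^{1/∑αᵢ} ‖y‖_α) / ‖y‖_α^{βH} dy` (with `‖y‖_α = ∑ᵢ |yᵢ|^{1/αᵢ}`)
is finite and equals `C · k^{βH/∑αᵢ − 1}` with `C = C(N, α, β, H) > 0` independent of `k`. -/
theorem stmt18 (N : ℕ) (hN : 0 < N) (α : Fin N → ℝ) (hα : ∀ i, 0 < α i)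
    (H β η : ℝ) (hH : 0 < H) (hβ : 0 < β) (hη : 0 < η)
    (hsum : β * H < ∑ i, α i) :
    ∃ C : ℝ, 0 < C ∧ ∀ k : ℕ, 0 < k →
      Integrable (fun y : Fin N → ℝ =>
        Real.exp (-((k : ℝ) ^ (1 / ∑ i, α i)) * ∑ i, |y i| ^ (1 / α i)) /
          (∑ i, |y i| ^ (1 / α i)) ^ (β * H)) volume ∧
      (∫ y : Fin N → ℝ,
        Real.exp (-((k : ℝ) ^ (1 / ∑ i, α i)) * ∑ i, |y i| ^ (1 / α i)) /
          (∑ i, |y i| ^ (1 / α i)) ^ (β * H)) =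
        C * (k : ℝ) ^ (β * H / (∑ i, α i) - 1) :=
  stmt18_general N hN α hα H β hH hβ hsum
end
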